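/- arXiv:2604.11418 — 3 statements merged into one kernel-verified Lean document; each statement's English description precedes it below -/
import Mathlib

section
/- Let x,y∈ℝ^N and let F,G,H be three closed sets in ℝ^N such that d_{x,r_1}(F,G)<ε_1 and d_{y,r_2}(G,H)<ε_2, where r_1,r_2>0 and ε_1,ε_2>0 (and the relevant sets meet the relevant balls). Then for every z∈ℝ^N and ρ>0 such that B(z,ρ+ε_1·r_1)⊆B(y,r_2) and B(z,ρ+ε_2·r_2)⊆B(x,r_1), one has d_{z,ρ}(F,H)<(ε_1·r_1+ε_2·r_2)/ρ. -/
open Metric Set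
open scoped Classical

noncomputable section

namespace DDTGen

variable {V : Type*} [NormedAddCommGroup V] [InnerProductSpace ℝ V]

/-- The cone over a finite set `X ⊆ V`: all nonnegative linear combinations of
elements of `X`.  For `X = ∅` this is `{0}`. -/
def coneOf (X : Finset V) : Set V :=
  {y | ∃ c : V → ℝ, (∀ v ∈ X, 0 ≤ c v) ∧ y = ∑ v ∈ X, c v • v}

/-- `X` is the base of a simple cone of dimension `m`: `X` consists of `m` unit
vectors and `{0} ∪ X` is affinely independent. -/
def IsSimpleBase (m : ℕ) (X : Finset V) : Prop :=
  X.card = m ∧ (∀ v ∈ X, ‖v‖ = 1) ∧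
    AffineIndependent ℝ (Subtype.val : (insert (0 : V) (X : Set V) : Set V) → V)

/-- A complex cone of dimension `m`: a finite union of distinct simple cones of
dimension `m` such that any two faces intersect in the common sub-face. -/
structure ComplexCone (V : Type*) [NormedAddCommGroup V] [InnerProductSpace ℝ V]
    (m : ℕ) where
  faces : Finset (Finset V)
  faces_nonempty : faces.Nonempty
  simple : ∀ X ∈ faces, IsSimpleBase m X
  inter_eq : ∀ X Y : Finset V, (∃ X' ∈ faces, X ⊆ X') → (∃ Y' ∈ faces, Y ⊆ Y') →
    coneOf X ∩ coneOf Y = coneOf (X ∩ Y)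

namespace ComplexCone

variable {m : ℕ}

/-- membership in `Ω_T`. -/
def inOmega (T : ComplexCone V m) (Y : Finset V) : Prop :=
  ∃ X ∈ T.faces, Y ⊆ X

/-- the underlying set of the complex cone. -/
def carrier (T : ComplexCone V m) : Set V :=
  ⋃ X ∈ T.faces, coneOf X

end ComplexCone

/-- The set of angles `∠(F₁,F₂)` of the paper: angles `∠ f₁ z f₂` with
`z ∈ C(F₁ ∩ F₂)`, `f_j ∈ C(F_j) \ C(F₁ ∩ F₂)` realizing the distance to
`C(F₁ ∩ F₂)` at `z`. -/
def angleSet (F₁ F₂ : Finset V) : Set ℝ :=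
  {θ | ∃ z ∈ coneOf (F₁ ∩ F₂),
      ∃ f₁ ∈ coneOf F₁ \ coneOf (F₁ ∩ F₂),
      ∃ f₂ ∈ coneOf F₂ \ coneOf (F₁ ∩ F₂),
      Metric.infDist f₁ (coneOf (F₁ ∩ F₂)) = dist f₁ z ∧
      Metric.infDist f₂ (coneOf (F₁ ∩ F₂)) = dist f₂ z ∧
      θ = EuclideanGeometry.angle f₁ z f₂}

/-- the non-flat condition for a complex cone. -/
def ComplexCone.NonFlat {m : ℕ} (T : ComplexCone V m) : Prop :=
  ∀ Y Z₁ Z₂ : Finset V, T.inOmega Y → T.inOmega Z₁ → T.inOmega Z₂ →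
    Y.card < m → Y = Z₁ ∩ Z₂ → Z₁.card = Y.card + 1 → Z₂.card = Y.card + 1 →
    sSup (angleSet Z₁ Z₂) < Real.pi

/-- the minimal angle `∠(T)` of a complex cone. -/
def ComplexCone.minAngle {m : ℕ} (T : ComplexCone V m) : ℝ :=
  sInf {θ | ∃ F₁ F₂ : Finset V, T.inOmega F₁ ∧ T.inOmega F₂ ∧
    F₁.Nonempty ∧ F₂.Nonempty ∧ ¬F₁ ⊆ F₂ ∧ ¬F₂ ⊆ F₁ ∧ θ = sInf (angleSet F₁ F₂)}

/-- relative interior of a (convex) set, following the paper's definition. -/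
def relInterior (F : Set V) : Set V :=
  {x | x ∈ F ∧ ∃ r > 0, (affineSpan ℝ F : Set V) ∩ Metric.ball x r ⊆ F}

/-- `RI m T`: points of `T` near which `T` coincides with an `m`-dimensional
affine plane. -/
def RI (m : ℕ) (T : Set V) : Set V :=
  {x | x ∈ T ∧ ∃ r > 0, ∃ Q : AffineSubspace ℝ V, (Q : Set V).Nonempty ∧
      Module.finrank ℝ Q.direction = m ∧
      T ∩ Metric.ball x r = (Q : Set V) ∩ Metric.ball x r}

/-- `π` is the orthogonal (nearest point) projection onto the affine subspace `P`. -/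
def IsOrthProjOnto (P : AffineSubspace ℝ V) (π : V →ᵃ[ℝ] V) : Prop :=
  (∀ y, π y ∈ P) ∧ (∀ p ∈ P, π p = p) ∧
    ∀ y : V, ∀ p ∈ P, inner ℝ (y - π y) (p - π y) = (0 : ℝ)

/-- normalized local Hausdorff distance `d_{x,r}(F₁,F₂)`. -/
def dxr {X : Type*} [PseudoMetricSpace X] (x : X) (r : ℝ) (F₁ F₂ : Set X) : ℝ :=
  (1 / r) * max (⨆ z ∈ F₂ ∩ Metric.ball x r, Metric.infDist z F₁)
                (⨆ z ∈ F₁ ∩ Metric.ball x r, Metric.infDist z F₂)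

/-- the blow-up cone `C(W ∩ B(x,r) − x)`. -/
def blowUp (W : Set V) (x : V) (r : ℝ) : Set V :=
  {y | ∃ c : ℝ, 0 ≤ c ∧ ∃ z ∈ W ∩ Metric.ball x r, y = c • (z - x)}

/-- projection of `ℝ^N` onto the first `N'` coordinates. -/
def proj1 (N' N : ℕ) (y : EuclideanSpace ℝ (Fin N)) : EuclideanSpace ℝ (Fin N') :=
  WithLp.toLp 2 (fun j => if h : (j : ℕ) < N then y ⟨(j : ℕ), h⟩ else 0)

/-- the set `T × ℝ^m × {0}` inside `ℝ^N`, where `T ⊆ ℝ^{N'}` occupies the first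
`N'` coordinates, the `ℝ^m` factor the next `m` coordinates, and the remaining
coordinates vanish. -/
def prodSet (N' N : ℕ) (T : Set (EuclideanSpace ℝ (Fin N'))) (m : ℕ) :
    Set (EuclideanSpace ℝ (Fin N)) :=
  {y | proj1 N' N y ∈ T ∧ ∀ i : Fin N, N' + m ≤ (i : ℕ) → y i = 0}

/-- data describing a set of type `m` in `ℝ^N`:
`W = R (T × ℝ^m × {0})` with `T` a non-flat complex cone of dimension `n−m`
and `R` an isometry of `ℝ^N`. -/
structure TypedCone (n N' N : ℕ) where
  m : ℕ
  m_le : m ≤ n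
  T : ComplexCone (EuclideanSpace ℝ (Fin N')) (n - m)
  nonflat : T.NonFlat
  R : EuclideanSpace ℝ (Fin N) ≃ᵢ EuclideanSpace ℝ (Fin N)

namespace TypedCone

variable {n N' N : ℕ}

/-- the underlying set `R (T × ℝ^m × {0})`. -/
def carrier (C : TypedCone n N' N) : Set (EuclideanSpace ℝ (Fin N)) :=
  C.R '' prodSet N' N C.T.carrier C.m

/-- the `d`-dimensional spine `L^d(W)`. -/
def spine (C : TypedCone n N' N) (d : ℕ) : Set (EuclideanSpace ℝ (Fin N)) :=
  if d < C.m then ∅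
  else C.R '' prodSet N' N
    (⋃ Y ∈ {Y : Finset (EuclideanSpace ℝ (Fin N')) |
        C.T.inOmega Y ∧ Y.card = d - C.m}, coneOf Y) C.m

/-- `L` is a branch of the `d`-dimensional spine of `C`. -/
def IsBranch (C : TypedCone n N' N) (d : ℕ) (L : Set (EuclideanSpace ℝ (Fin N))) : Prop :=
  C.m ≤ d ∧ ∃ Y : Finset (EuclideanSpace ℝ (Fin N')),
    C.T.inOmega Y ∧ Y.card = d - C.m ∧ L = C.R '' prodSet N' N (coneOf Y) C.m

end TypedCone

/-- `W` is a set of type `m` in `ℝ^N`. -/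
def IsTypeM (n N' N m : ℕ) (W : Set (EuclideanSpace ℝ (Fin N))) : Prop :=
  m ≤ n ∧ ∃ C : TypedCone n N' N, C.m = m ∧ C.carrier = W

/-- `𝒯𝒜`: all sets of type `m`, `0 ≤ m ≤ n`. -/
def TA (n N' N : ℕ) : Set (Set (EuclideanSpace ℝ (Fin N))) :=
  {W | ∃ m, IsTypeM n N' N m W}

/-- `𝒜(W)`: all isometric images of (stabilized) blow-up cones of `W`. -/
def calA {N : ℕ} (W : Set (EuclideanSpace ℝ (Fin N))) :
    Set (Set (EuclideanSpace ℝ (Fin N))) :=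
  {Z | ∃ R : EuclideanSpace ℝ (Fin N) ≃ᵢ EuclideanSpace ℝ (Fin N),
      ∃ x ∈ W, ∃ r : ℝ, 0 < r ∧
        (∀ r' : ℝ, 0 < r' → r' ≤ r → blowUp W x r' = blowUp W x r) ∧
        Z = R '' blowUp W x r}

/-- `𝒜(ℬ) = ∪_{W ∈ ℬ} 𝒜(W)`. -/
def calAB {N : ℕ} (ℬ : Set (Set (EuclideanSpace ℝ (Fin N)))) :
    Set (Set (EuclideanSpace ℝ (Fin N))) :=
  ⋃ W ∈ ℬ, calA W

/-- `W₁ ∼ W₂` iff they differ by an isometry of `ℝ^N`. -/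
def EquivIso {N : ℕ} (W₁ W₂ : Set (EuclideanSpace ℝ (Fin N))) : Prop :=
  ∃ R : EuclideanSpace ℝ (Fin N) ≃ᵢ EuclideanSpace ℝ (Fin N), W₁ = R '' W₂

/-- `ℬ/∼` is finite: `ℬ` is covered by finitely many isometry classes. -/
def FiniteModIso {N : ℕ} (ℬ : Set (Set (EuclideanSpace ℝ (Fin N)))) : Prop :=
  ∃ S : Set (Set (EuclideanSpace ℝ (Fin N))), S.Finite ∧ ∀ W ∈ ℬ, ∃ W₀ ∈ S, EquivIso W W₀

/-- the minimal angle constant `α(ℬ)`. -/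
def alphaB (n N' N : ℕ) (ℬ : Set (Set (EuclideanSpace ℝ (Fin N)))) : ℝ :=
  sInf {a | ∃ C : TypedCone n N' N, C.carrier ∈ calAB ℬ ∧ a = C.T.minAngle}

/-- `δ₀` is a cone-separation constant for `ℬ` (Proposition 2.10). -/
def SepConst (n N' N : ℕ) (ℬ : Set (Set (EuclideanSpace ℝ (Fin N)))) (δ₀ : ℝ) : Prop :=
  0 < δ₀ ∧ ∀ t : ℕ, t ≤ n - 1 →
    ∀ C : TypedCone n N' N, C.carrier ∈ calAB ℬ → C.m ≤ t →
    ∀ x ∈ C.spine t, ∀ W ∈ calAB ℬ,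
      (∃ k, t + 1 ≤ k ∧ k ≤ n ∧ IsTypeM n N' N k W) →
      ∀ r : ℝ, 0 < r → dxr x r C.carrier W > δ₀

/-- `n₀` is a cone-replacement constant for `ℬ` (Proposition 2.11). -/
def RepConst (n N' N : ℕ) (ℬ : Set (Set (EuclideanSpace ℝ (Fin N)))) (n₀ : ℝ) : Prop :=
  10 < n₀ ∧ ∀ t : ℕ, t ≤ n - 1 →
    ∀ C : TypedCone n N' N, C.carrier ∈ calAB ℬ → C.m ≤ t →
    ∀ (x : EuclideanSpace ℝ (Fin N)) (r : ℝ), 0 < r →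
      (C.carrier ∩ Metric.ball x r).Nonempty →
      Metric.ball x (n₀ * r) ∩ C.spine t = ∅ →
      ∃ Y ∈ calAB ℬ, (∃ u, t + 1 ≤ u ∧ u ≤ n ∧ IsTypeM n N' N u Y) ∧
        C.carrier ∩ Metric.ball x r = Y ∩ Metric.ball x r

/-- `a_m(x,r)`: the infimum of `d_{x,r}(E,W)` over sets `W ∈ 𝒜(ℬ)` of type `m`
whose `m`-spine passes through `x`. -/
def aM (n N' N : ℕ) (ℬ : Set (Set (EuclideanSpace ℝ (Fin N))))
    (E : Set (EuclideanSpace ℝ (Fin N))) (m : ℕ)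
    (x : EuclideanSpace ℝ (Fin N)) (r : ℝ) : ℝ :=
  sInf {d | ∃ C : TypedCone n N' N, C.m = m ∧ C.carrier ∈ calAB ℬ ∧ x ∈ C.spine m ∧
      d = dxr x r E C.carrier}

/-- the stratum `E_m`. -/
def Estrat (n N' N : ℕ) (ℬ : Set (Set (EuclideanSpace ℝ (Fin N))))
    (E : Set (EuclideanSpace ℝ (Fin N))) (C₀ ε : ℝ) (m : ℕ) :
    Set (EuclideanSpace ℝ (Fin N)) :=
  {x | x ∈ E ∩ Metric.ball 0 2 ∧
      ∃ rx > 0, ∀ r : ℝ, 0 < r → r < rx → aM n N' N ℬ E m x r < C₀ * ε}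

end DDTGen

namespace DDTGen

section Excess

variable {X : Type*} [PseudoMetricSpace X]

def excess (c : X) (r : ℝ) (A B : Set X) : ℝ :=
  ⨆ w ∈ B ∩ ball c r, infDist w A

lemma dxr_eq_max_excess (c : X) (r : ℝ) (A B : Set X) :
    dxr c r A B = (1 / r) * max (excess c r A B) (excess c r B A) :=
  rfl

lemma excess_nonneg (c : X) (r : ℝ) (A B : Set X) : 0 ≤ excess c r A B :=
  Real.iSup_nonneg fun _ => Real.iSup_nonneg fun _ => infDist_nonneg

lemma infDist_le_excess {c w : X} {r : ℝ} {A B : Set X} (hw : w ∈ B ∩ ball c r) :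
    infDist w A ≤ excess c r A B := by
  refine le_ciSup₂ (f := fun w (_ : w ∈ B ∩ ball c r) => infDist w A)
    ⟨infDist c A + r, ?_⟩ w hw
  rintro _ ⟨_, ⟨v, rfl⟩, ⟨hv, rfl⟩⟩
  calc infDist v A ≤ infDist c A + dist v c := infDist_le_infDist_add_dist
    _ ≤ infDist c A + r := by linarith [(mem_ball.1 hv.2).le]

lemma excess_le {c : X} {r b : ℝ} {A B : Set X} (hb : 0 ≤ b)
    (h : ∀ w ∈ B ∩ ball c r, infDist w A ≤ b) : excess c r A B ≤ b :=
  Real.iSup_le (fun w => Real.iSup_le (h w) hb) hb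

lemma excess_lt_of_dxr_lt {c : X} {r ε : ℝ} {A B : Set X} (hr : 0 < r)
    (h : dxr c r A B < ε) : excess c r A B < ε * r ∧ excess c r B A < ε * r := by
  rw [dxr_eq_max_excess, one_div_mul_eq_div, div_lt_iff₀ hr, max_lt_iff] at h
  exact h

lemma infDist_le_infDist_add_of_forall_dist_lt {w : X} {R b : ℝ} {A G : Set X}
    (hG : G.Nonempty) (hwG : infDist w G < R)
    (hA : ∀ g ∈ G, dist w g < R → infDist g A ≤ b) :
    infDist w A ≤ infDist w G + b := by
  refine le_of_forall_pos_le_add fun δ hδ => ?_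
  obtain ⟨g, hg, hwg⟩ := (infDist_lt_iff hG).1 (lt_min hwG (lt_add_of_pos_right _ hδ))
  calc infDist w A ≤ infDist g A + dist w g := infDist_le_infDist_add_dist
    _ ≤ b + (infDist w G + δ) := add_le_add (hA g hg (hwg.trans_le (min_le_left _ _)))
        (hwg.le.trans (min_le_right _ _))
    _ = infDist w G + b + δ := by ring

/-- A point of `B` near `z` is close to points of `G` near `y`; those within `δ` of it lie in the
ball around `x`, where `G` is close to `A`. -/
lemma excess_le_excess_add_excess {x y z : X} {r₁ r₂ ρ δ : ℝ} {A G B : Set X}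
    (hG : G.Nonempty) (hzy : ball z ρ ⊆ ball y r₂) (hBG : excess y r₂ G B < δ)
    (hzx : ball z (ρ + δ) ⊆ ball x r₁) :
    excess z ρ A B ≤ excess y r₂ G B + excess x r₁ A G := by
  refine excess_le (add_nonneg (excess_nonneg _ _ _ _) (excess_nonneg _ _ _ _)) ?_
  rintro w ⟨hwB, hwz⟩
  have hwG : infDist w G ≤ excess y r₂ G B := infDist_le_excess ⟨hwB, hzy hwz⟩
  calc infDist w A ≤ infDist w G + excess x r₁ A G :=
        infDist_le_infDist_add_of_forall_dist_lt hG (hwG.trans_lt hBG) fun g hg hwg =>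
          infDist_le_excess ⟨hg, hzx <| mem_ball.2 <| by
            linarith [dist_triangle g w z, dist_comm g w, mem_ball.1 hwz]⟩
    _ ≤ excess y r₂ G B + excess x r₁ A G := by gcongr

end Excess

theorem statement8_general
    (N : ℕ) (x y z : EuclideanSpace ℝ (Fin N))
    (F G H : Set (EuclideanSpace ℝ (Fin N)))
    (r₁ r₂ ε₁ ε₂ ρ : ℝ)
    (hr₁ : 0 < r₁) (hr₂ : 0 < r₂) (hε₁ : 0 < ε₁) (hε₂ : 0 < ε₂) (hρ : 0 < ρ)
    (hGx : (G ∩ ball x r₁).Nonempty)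
    (h₁ : dxr x r₁ F G < ε₁) (h₂ : dxr y r₂ G H < ε₂)
    (hz₁ : ball z (ρ + ε₁ * r₁) ⊆ ball y r₂)
    (hz₂ : ball z (ρ + ε₂ * r₂) ⊆ ball x r₁) :
    dxr z ρ F H < (ε₁ * r₁ + ε₂ * r₂) / ρ := by
  have hG : G.Nonempty := hGx.mono inter_subset_left
  obtain ⟨hFG, hGF⟩ := excess_lt_of_dxr_lt hr₁ h₁
  obtain ⟨hGH, hHG⟩ := excess_lt_of_dxr_lt hr₂ h₂
  have hzy : ball z ρ ⊆ ball y r₂ :=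
    (ball_subset_ball (le_add_of_nonneg_right (by positivity))).trans hz₁
  have hzx : ball z ρ ⊆ ball x r₁ :=
    (ball_subset_ball (le_add_of_nonneg_right (by positivity))).trans hz₂
  have hFH : excess z ρ F H ≤ excess y r₂ G H + excess x r₁ F G :=
    excess_le_excess_add_excess hG hzy hGH hz₂
  have hHF : excess z ρ H F ≤ excess x r₁ G F + excess y r₂ H G :=
    excess_le_excess_add_excess hG hzx hGF hz₁
  rw [dxr_eq_max_excess, one_div_mul_eq_div]
  gcongr
  exact max_lt (by linarith) (by linarith)

/-- **Lemma 2.15** (quasi-triangle inequality for `d_{x,r}`): if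
`d_{x,r₁}(F,G) < ε₁` and `d_{y,r₂}(G,H) < ε₂`, then for every `z` and `ρ > 0`
with `B(z, ρ + ε₁ r₁) ⊆ B(y, r₂)` and `B(z, ρ + ε₂ r₂) ⊆ B(x, r₁)` one has
`d_{z,ρ}(F,H) < (ε₁ r₁ + ε₂ r₂)/ρ`. -/
theorem statement8
    (N : ℕ) (x y z : EuclideanSpace ℝ (Fin N))
    (F G H : Set (EuclideanSpace ℝ (Fin N)))
    (hF : IsClosed F) (hG : IsClosed G) (hH : IsClosed H)
    (r₁ r₂ ε₁ ε₂ ρ : ℝ)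
    (hr₁ : 0 < r₁) (hr₂ : 0 < r₂) (hε₁ : 0 < ε₁) (hε₂ : 0 < ε₂) (hρ : 0 < ρ)
    (hFx : (F ∩ ball x r₁).Nonempty) (hGx : (G ∩ ball x r₁).Nonempty)
    (hGy : (G ∩ ball y r₂).Nonempty) (hHy : (H ∩ ball y r₂).Nonempty)
    (hFz : (F ∩ ball z ρ).Nonempty) (hHz : (H ∩ ball z ρ).Nonempty)
    (h₁ : dxr x r₁ F G < ε₁) (h₂ : dxr y r₂ G H < ε₂)
    (hz₁ : ball z (ρ + ε₁ * r₁) ⊆ ball y r₂)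
    (hz₂ : ball z (ρ + ε₂ * r₂) ⊆ ball x r₁) :
    dxr z ρ F H < (ε₁ * r₁ + ε₂ * r₂) / ρ :=
  statement8_general N x y z F G H r₁ r₂ ε₁ ε₂ ρ hr₁ hr₂ hε₁ hε₂ hρ hGx h₁ h₂ hz₁ hz₂

end DDTGen
end
end

section
/- Let ℬ⊂𝒯𝒜 be such that ℬ/∼ is finite, let δ_0 and n_0 be the cone-separation and cone-replacement constants of ℬ, and write 𝒜(k) for the sets of type k in 𝒜(ℬ). Let 0≤m<n, let W∈𝒜(m) have its m-spine passing through x, and suppose d_{x,r}(W,Z)<τ for some Z∈𝒜(ℬ) and some τ≤δ_0. Then Z∈∪_{k=0}^m 𝒜(k), and dist(x, L^m(Z)) < n_0·(1+δ_0^{−1})·τ·r. -/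
open Metric Set
open scoped Classical

noncomputable section

/-! Every set of `𝒜(ℬ)` is itself a set of type `k` for some `k`: a blow-up of a typed cone at a
point of its lowest spine is a translate of the cone, and at any other point the replacement
property of `n₀` exchanges the cone, near that point, for one of strictly larger type, so the
type strictly increases until the point lies on the lowest spine.

Once `Z` is typed, the separation property of `δ₀` forbids its type to exceed `m`. If the
`m`-spine of `Z` stayed `n₀ ρ` away from `x`, with `ρ = (1 + δ₀⁻¹) τ r`, then by replacement `Z`
would agree on `B(x, ρ)` with a set `Y` of type `> m`; since `B(x, ρ)` is the ball of radius
`r' = τ r / δ₀` enlarged by the error `τ r`, this gives `d_{x,r'}(W, Y) ≤ τ r / r' = δ₀`,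
contradicting separation at scale `r'`. -/

namespace DDTGen

section LocalHausdorff

variable {X : Type*} [PseudoMetricSpace X] {x : X} {r τ : ℝ} {F G : Set X}

lemma infDist_le_iSup_inter_ball {z : X} (hz : z ∈ G ∩ ball x r) :
    infDist z F ≤ ⨆ y ∈ G ∩ ball x r, infDist y F := by
  have hr : 0 < r := pos_of_mem_ball hz.2
  have hbdd : BddAbove (range fun y => ⨆ _ : y ∈ G ∩ ball x r, infDist y F) := by
    refine ⟨r + infDist x F, ?_⟩
    rintro _ ⟨y, rfl⟩
    refine Real.iSup_le (fun hy => ?_) (add_nonneg hr.le infDist_nonneg)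
    linarith [infDist_le_infDist_add_dist (s := F) (x := y) (y := x), mem_ball.1 hy.2]
  exact le_ciSup_of_le hbdd z (ciSup_pos (f := fun _ => infDist z F) hz).ge

lemma dxr_nonneg (hr : 0 < r) (F G : Set X) : 0 ≤ dxr x r F G :=
  mul_nonneg (by positivity)
    (le_max_of_le_left (Real.iSup_nonneg fun _ => Real.iSup_nonneg fun _ => infDist_nonneg))

lemma infDist_lt_of_dxr_lt_left (hr : 0 < r) (h : dxr x r F G < τ) {z : X}
    (hz : z ∈ F ∩ ball x r) : infDist z G < τ * r := by
  rw [dxr, one_div, inv_mul_lt_iff₀ hr, mul_comm] at h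
  exact (infDist_le_iSup_inter_ball hz).trans_lt ((le_max_right _ _).trans_lt h)

lemma infDist_lt_of_dxr_lt_right (hr : 0 < r) (h : dxr x r F G < τ) {z : X}
    (hz : z ∈ G ∩ ball x r) : infDist z F < τ * r := by
  rw [dxr, one_div, inv_mul_lt_iff₀ hr, mul_comm] at h
  exact (infDist_le_iSup_inter_ball hz).trans_lt ((le_max_left _ _).trans_lt h)

lemma dxr_le_of_forall_infDist_le {B : ℝ} (hr : 0 < r) (hB : 0 ≤ B)
    (hG : ∀ z ∈ G ∩ ball x r, infDist z F ≤ B * r)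
    (hF : ∀ z ∈ F ∩ ball x r, infDist z G ≤ B * r) : dxr x r F G ≤ B := by
  rw [dxr, one_div, inv_mul_le_iff₀ hr, mul_comm r]
  have hBr : 0 ≤ B * r := by positivity
  exact max_le (Real.iSup_le (fun z => Real.iSup_le (hG z) hBr) hBr)
    (Real.iSup_le (fun z => Real.iSup_le (hF z) hBr) hBr)

lemma nonempty_inter_ball_of_dxr_lt (hr : 0 < r) (hx : x ∈ F) (hG : G.Nonempty)
    (h : dxr x r F G < τ) : (G ∩ ball x (τ * r)).Nonempty := by
  obtain ⟨z, hzG, hxz⟩ :=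
    (infDist_lt_iff hG).1 (infDist_lt_of_dxr_lt_left hr h ⟨hx, mem_ball_self hr⟩)
  exact ⟨z, hzG, mem_ball'.2 hxz⟩

lemma dxr_le_of_inter_ball_eq {Y : Set X} {r' : ℝ} (hr' : 0 < r') (hr'r : r' ≤ r)
    (hG : G.Nonempty) (h : dxr x r F G < τ)
    (hGY : G ∩ ball x (r' + τ * r) = Y ∩ ball x (r' + τ * r)) :
    dxr x r' F Y ≤ τ * r / r' := by
  have hr : 0 < r := hr'.trans_le hr'r
  have hτr : 0 ≤ τ * r := mul_nonneg ((dxr_nonneg hr F G).trans h.le) hr.le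
  refine dxr_le_of_forall_infDist_le hr' (by positivity) (fun z hz => ?_) (fun z hz => ?_)
    <;> rw [div_mul_cancel₀ _ hr'.ne']
  · have hzG : z ∈ G := (hGY ▸ ⟨hz.1, ball_subset_ball (by linarith) hz.2⟩ :
      z ∈ G ∩ ball x (r' + τ * r)).1
    exact (infDist_lt_of_dxr_lt_right hr h ⟨hzG, ball_subset_ball hr'r hz.2⟩).le
  · obtain ⟨z', hz'G, hzz'⟩ := (infDist_lt_iff hG).1
      (infDist_lt_of_dxr_lt_left hr h ⟨hz.1, ball_subset_ball hr'r hz.2⟩)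
    have hz'x : dist z' x < r' + τ * r := by
      linarith [dist_triangle_left z' x z, mem_ball.1 hz.2]
    have hz'Y : z' ∈ Y := (hGY ▸ ⟨hz'G, hz'x⟩ : z' ∈ Y ∩ ball x (r' + τ * r)).1
    exact (infDist_le_dist_of_mem hz'Y).trans hzz'.le

end LocalHausdorff

section Cones

variable {V : Type*} [NormedAddCommGroup V] [InnerProductSpace ℝ V]

lemma blowUp_congr_of_inter_ball_eq {W₁ W₂ : Set V} {x : V} {ρ r : ℝ} (h : W₁ ∩ ball x ρ = W₂ ∩ ball x ρ) (hr : r ≤ ρ) :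
    blowUp W₁ x r = blowUp W₂ x r := by
  have hW : W₁ ∩ ball x r = W₂ ∩ ball x r := by
    rw [← inter_eq_self_of_subset_right (ball_subset_ball hr), ← inter_assoc, h, inter_assoc]
  simp only [blowUp, hW]

def IsConeWithApex (K : Set V) (x₀ : V) : Prop :=
  ∀ y ∈ K, ∀ t : ℝ, 0 ≤ t → x₀ + t • (y - x₀) ∈ K

lemma blowUp_eq_image_sub {K : Set V} {x₀ : V} (hK : IsConeWithApex K x₀) {r : ℝ}
    (hr : 0 < r) : blowUp K x₀ r = (· - x₀) '' K := by
  ext y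
  constructor
  · rintro ⟨c, hc, z, ⟨hzK, -⟩, rfl⟩
    exact ⟨x₀ + c • (z - x₀), hK z hzK c hc, add_sub_cancel_left _ _⟩
  · rintro ⟨y, hyK, rfl⟩
    -- shrink `y` towards the apex by `s` until it lands in `B(x₀, r)`
    set s := r / (‖y - x₀‖ + r)
    have hs : 0 < s := by positivity
    have hsy : s * ‖y - x₀‖ < r := by
      rw [div_mul_eq_mul_div, div_lt_iff₀ (by positivity)]
      nlinarith
    refine ⟨s⁻¹, inv_nonneg.2 hs.le, x₀ + s • (y - x₀), ⟨hK y hyK s hs.le, ?_⟩, ?_⟩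
    · rwa [mem_ball, dist_eq_norm, add_sub_cancel_left, norm_smul, Real.norm_of_nonneg hs.le]
    · rw [add_sub_cancel_left, smul_smul, inv_mul_cancel₀ hs.ne', one_smul]

lemma IsometryEquiv.map_add_smul_sub {V' : Type*} [NormedAddCommGroup V'] [NormedSpace ℝ V']
    (f : V ≃ᵢ V') (w p : V) (t : ℝ) : f (w + t • (p - w)) = f w + t • (f p - f w) := by
  simpa [AffineMap.lineMap_apply, add_comm] using
    f.toRealAffineIsometryEquiv.toAffineMap.apply_lineMap w p t

lemma IsConeWithApex.image_isometryEquiv {V' : Type*} [NormedAddCommGroup V']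
    [InnerProductSpace ℝ V'] {K : Set V} {w : V} (hK : IsConeWithApex K w) (f : V ≃ᵢ V') :
    IsConeWithApex (f '' K) (f w) := by
  rintro _ ⟨p, hp, rfl⟩ t ht
  exact ⟨w + t • (p - w), hK p hp t ht, IsometryEquiv.map_add_smul_sub f w p t⟩

lemma zero_mem_coneOf (X : Finset V) : (0 : V) ∈ coneOf X :=
  ⟨fun _ => 0, fun _ _ => le_rfl, by simp⟩

lemma smul_mem_coneOf {X : Finset V} {c : ℝ} (hc : 0 ≤ c) {y : V} (hy : y ∈ coneOf X) :
    c • y ∈ coneOf X := by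
  obtain ⟨f, hf, rfl⟩ := hy
  exact ⟨fun v => c * f v, fun v hv => mul_nonneg hc (hf v hv), by
    simp only [Finset.smul_sum, smul_smul]⟩

lemma coneOf_empty : coneOf (∅ : Finset V) = {0} := by
  ext y
  simp [coneOf]

namespace ComplexCone

variable {m : ℕ} (T : ComplexCone V m)

lemma zero_mem_carrier : (0 : V) ∈ T.carrier :=
  let ⟨X, hX⟩ := T.faces_nonempty
  mem_biUnion hX (zero_mem_coneOf X)

lemma smul_mem_carrier {c : ℝ} (hc : 0 ≤ c) {y : V} (hy : y ∈ T.carrier) :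
    c • y ∈ T.carrier := by
  obtain ⟨X, hX, hyX⟩ := mem_iUnion₂.1 hy
  exact mem_biUnion hX (smul_mem_coneOf hc hyX)

lemma carrier_eq_singleton_zero (hm : m = 0) : T.carrier = {0} := by
  refine subset_antisymm (fun y hy => ?_) (singleton_subset_iff.2 T.zero_mem_carrier)
  obtain ⟨X, hX, hyX⟩ := mem_iUnion₂.1 hy
  rwa [Finset.card_eq_zero.1 ((T.simple X hX).1.trans hm), coneOf_empty] at hyX

end ComplexCone

end Cones

section ProdSet

variable {N' N : ℕ}

lemma proj1_add (y z : EuclideanSpace ℝ (Fin N)) :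
    proj1 N' N (y + z) = proj1 N' N y + proj1 N' N z := by
  ext j
  by_cases h : (j : ℕ) < N <;> simp [proj1, h]

lemma proj1_smul (c : ℝ) (y : EuclideanSpace ℝ (Fin N)) :
    proj1 N' N (c • y) = c • proj1 N' N y := by
  ext j
  by_cases h : (j : ℕ) < N <;> simp [proj1, h]

lemma proj1_sub (y z : EuclideanSpace ℝ (Fin N)) :
    proj1 N' N (y - z) = proj1 N' N y - proj1 N' N z := by
  ext j
  by_cases h : (j : ℕ) < N <;> simp [proj1, h]

lemma proj1_zero : proj1 N' N (0 : EuclideanSpace ℝ (Fin N)) = 0 := by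
  ext j
  simp [proj1]

lemma prodSet_mono {T T' : Set (EuclideanSpace ℝ (Fin N'))} (h : T ⊆ T') (m : ℕ) :
    prodSet N' N T m ⊆ prodSet N' N T' m :=
  fun _ hy => ⟨h hy.1, hy.2⟩

lemma zero_mem_prodSet {T : Set (EuclideanSpace ℝ (Fin N'))} (hT : 0 ∈ T) (m : ℕ) :
    (0 : EuclideanSpace ℝ (Fin N)) ∈ prodSet N' N T m :=
  ⟨by rw [proj1_zero]; exact hT, fun _ _ => rfl⟩

lemma isClosed_prodSet_zero (m : ℕ) :
    IsClosed (prodSet N' N ({0} : Set (EuclideanSpace ℝ (Fin N'))) m) := by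
  have hproj : Continuous (proj1 N' N) := by
    refine PiLp.continuous_toLp 2 _ |>.comp (continuous_pi fun j => ?_)
    split_ifs
    exacts [(EuclideanSpace.proj _).continuous, continuous_const]
  have hcoord : ∀ i : Fin N, Continuous fun y : EuclideanSpace ℝ (Fin N) => y i :=
    fun i => (EuclideanSpace.proj i).continuous
  have hEq : prodSet N' N ({0} : Set (EuclideanSpace ℝ (Fin N'))) m =
      proj1 N' N ⁻¹' {0} ∩ ⋂ (i : Fin N) (_ : N' + m ≤ (i : ℕ)), {y | y i = 0} := by
    ext y
    simp [prodSet]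
  rw [hEq]
  exact (isClosed_singleton.preimage hproj).inter
    (isClosed_iInter fun i => isClosed_iInter fun _ => isClosed_eq (hcoord i) continuous_const)

lemma isConeWithApex_prodSet {T : Set (EuclideanSpace ℝ (Fin N'))}
    (hT : ∀ c : ℝ, 0 ≤ c → ∀ ζ ∈ T, c • ζ ∈ T) {m : ℕ} {w : EuclideanSpace ℝ (Fin N)}
    (hw : w ∈ prodSet N' N ({0} : Set (EuclideanSpace ℝ (Fin N'))) m) :
    IsConeWithApex (prodSet N' N T m) w := by
  rintro p ⟨hp₁, hp₂⟩ t ht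
  obtain ⟨hw₁, hw₂⟩ := hw
  refine ⟨?_, fun i hi => ?_⟩
  · rw [proj1_add, proj1_smul, proj1_sub, mem_singleton_iff.1 hw₁, sub_zero, zero_add]
    exact hT t ht _ hp₁
  · simp [hw₂ i hi, hp₂ i hi]

end ProdSet


namespace TypedCone

variable {n N' N : ℕ} (D : TypedCone n N' N)

def map (R : EuclideanSpace ℝ (Fin N) ≃ᵢ EuclideanSpace ℝ (Fin N)) : TypedCone n N' N :=
  { D with R := D.R.trans R }

lemma map_carrier (R : EuclideanSpace ℝ (Fin N) ≃ᵢ EuclideanSpace ℝ (Fin N)) :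
    (D.map R).carrier = R '' D.carrier := by
  simp only [carrier, map, image_image]
  rfl

lemma spine_self_eq :
    D.spine D.m = D.R '' prodSet N' N ({0} : Set (EuclideanSpace ℝ (Fin N'))) D.m := by
  rw [spine, if_neg (lt_irrefl D.m), Nat.sub_self]
  congr
  ext ζ
  obtain ⟨X, hX⟩ := D.T.faces_nonempty
  simpa [ComplexCone.inOmega, coneOf_empty] using fun _ => ⟨X, hX⟩

lemma isClosed_spine_self : IsClosed (D.spine D.m) := by
  rw [spine_self_eq]
  exact D.R.toHomeomorph.isClosedMap _ (isClosed_prodSet_zero D.m)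

lemma spine_self_nonempty : (D.spine D.m).Nonempty :=
  ⟨D.R 0, by
    rw [spine_self_eq]
    exact mem_image_of_mem _ (zero_mem_prodSet (mem_singleton 0) D.m)⟩

lemma spine_self_subset_carrier : D.spine D.m ⊆ D.carrier := by
  rw [spine_self_eq]
  exact image_mono (prodSet_mono (singleton_subset_iff.2 D.T.zero_mem_carrier) D.m)

lemma carrier_nonempty : D.carrier.Nonempty :=
  D.spine_self_nonempty.mono D.spine_self_subset_carrier

lemma carrier_eq_spine_self_of_le (h : n ≤ D.m) : D.carrier = D.spine D.m := by
  rw [spine_self_eq, carrier, D.T.carrier_eq_singleton_zero (by omega)]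

lemma isConeWithApex {x₀ : EuclideanSpace ℝ (Fin N)} (hx₀ : x₀ ∈ D.spine D.m) :
    IsConeWithApex D.carrier x₀ := by
  rw [spine_self_eq] at hx₀
  obtain ⟨w, hw, rfl⟩ := hx₀
  exact (isConeWithApex_prodSet (fun c hc _ hζ => D.T.smul_mem_carrier hc hζ) hw)
    |>.image_isometryEquiv D.R

end TypedCone

lemma mem_calA_self {N : ℕ} {K : Set (EuclideanSpace ℝ (Fin N))}
    {x₀ : EuclideanSpace ℝ (Fin N)} (hK : IsConeWithApex K x₀) (hx₀ : x₀ ∈ K) : K ∈ calA K := by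
  refine ⟨IsometryEquiv.addRight x₀, x₀, hx₀, 1, one_pos, fun r' hr' _ => ?_, ?_⟩
  · rw [blowUp_eq_image_sub hK hr', blowUp_eq_image_sub hK one_pos]
  · rw [blowUp_eq_image_sub hK one_pos, image_image]
    simp

variable {n N' N : ℕ} {ℬ : Set (Set (EuclideanSpace ℝ (Fin N)))}

lemma mem_calAB_of_mem (hB : ℬ ⊆ TA n N' N) {W : Set (EuclideanSpace ℝ (Fin N))}
    (hW : W ∈ ℬ) : W ∈ calAB ℬ := by
  obtain ⟨-, -, D, -, rfl⟩ := hB hW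
  obtain ⟨x₀, hx₀⟩ := D.spine_self_nonempty
  exact mem_biUnion hW (mem_calA_self (D.isConeWithApex hx₀) (D.spine_self_subset_carrier hx₀))

lemma SepConst.le_of_dxr_le {δ₀ : ℝ} (hδ : SepConst n N' N ℬ δ₀) {t : ℕ} (ht : t ≤ n - 1)
    {C : TypedCone n N' N} (hC : C.carrier ∈ calAB ℬ) (hCt : C.m ≤ t)
    {x : EuclideanSpace ℝ (Fin N)} (hx : x ∈ C.spine t)
    {W : Set (EuclideanSpace ℝ (Fin N))} (hW : W ∈ calAB ℬ) {k : ℕ}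
    (hk : IsTypeM n N' N k W)
    {r : ℝ} (hr : 0 < r) (h : dxr x r C.carrier W ≤ δ₀) : k ≤ t := by
  by_contra hkt
  exact (hδ.2 t ht C hC hCt x hx W hW ⟨k, by omega, hk.1, hk⟩ r hr).not_ge h

lemma RepConst.exists_inter_ball_eq {n₀ : ℝ} (hn₀ : RepConst n N' N ℬ n₀) {t : ℕ}
    (ht : t ≤ n - 1) {D : TypedCone n N' N} (hD : D.carrier ∈ calAB ℬ) (hDt : D.m ≤ t)
    {x : EuclideanSpace ℝ (Fin N)} {ρ : ℝ} (hρ : 0 < ρ)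
    (hne : (D.carrier ∩ ball x ρ).Nonempty)
    (hfar : n₀ * ρ ≤ infDist x (D.spine t)) :
    ∃ Y ∈ calAB ℬ, (∃ u, t + 1 ≤ u ∧ u ≤ n ∧ IsTypeM n N' N u Y) ∧
      D.carrier ∩ ball x ρ = Y ∩ ball x ρ :=
  hn₀.2 t ht D hD hDt x ρ hρ hne <|
    disjoint_iff_inter_eq_empty.1 (disjoint_ball_infDist.mono_left (ball_subset_ball hfar))

lemma TypedCone.exists_inter_ball_eq_of_notMem_spine {n₀ : ℝ} (hn₀ : RepConst n N' N ℬ n₀)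
    {D : TypedCone n N' N} (hD : D.carrier ∈ calAB ℬ) {x₀ : EuclideanSpace ℝ (Fin N)}
    (hx₀ : x₀ ∈ D.carrier) (hsp : x₀ ∉ D.spine D.m) :
    ∃ ρ > 0, ∃ Y : TypedCone n N' N, Y.carrier ∈ calAB ℬ ∧ D.m < Y.m ∧
      D.carrier ∩ ball x₀ ρ = Y.carrier ∩ ball x₀ ρ := by
  have hmn : D.m < n := lt_of_not_ge fun h => hsp (D.carrier_eq_spine_self_of_le h ▸ hx₀)
  have hdist : 0 < infDist x₀ (D.spine D.m) :=
    (D.isClosed_spine_self.notMem_iff_infDist_pos D.spine_self_nonempty).1 hsp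
  have hn₀pos : 0 < n₀ := by linarith [hn₀.1]
  have hρ : 0 < infDist x₀ (D.spine D.m) / n₀ := by positivity
  obtain ⟨_, hY, ⟨_, hu, -, -, Y, rfl, rfl⟩, hDY⟩ := hn₀.exists_inter_ball_eq (by omega) hD
    le_rfl hρ ⟨x₀, hx₀, mem_ball_self hρ⟩ (mul_div_cancel₀ _ hn₀pos.ne').le
  exact ⟨_, hρ, Y, hY, hu, hDY⟩

theorem TypedCone.exists_carrier_eq_blowUp {n₀ : ℝ} (hn₀ : RepConst n N' N ℬ n₀)
    (D : TypedCone n N' N) (hD : D.carrier ∈ calAB ℬ) {x₀ : EuclideanSpace ℝ (Fin N)}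
    (hx₀ : x₀ ∈ D.carrier) {r₀ : ℝ} (hr₀ : 0 < r₀)
    (hstab : ∀ r, 0 < r → r ≤ r₀ → blowUp D.carrier x₀ r = blowUp D.carrier x₀ r₀) :
    ∃ D' : TypedCone n N' N, D'.carrier = blowUp D.carrier x₀ r₀ := by
  by_cases hsp : x₀ ∈ D.spine D.m
  · refine ⟨D.map (IsometryEquiv.subRight x₀), ?_⟩
    rw [D.map_carrier, blowUp_eq_image_sub (D.isConeWithApex hsp) hr₀]
    rfl
  obtain ⟨ρ, hρ, Y, hY, hDY, hYD⟩ := D.exists_inter_ball_eq_of_notMem_spine hn₀ hD hx₀ hsp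
  have hr : 0 < min ρ r₀ := lt_min hρ hr₀
  have hblow : ∀ r, 0 < r → r ≤ min ρ r₀ → blowUp Y.carrier x₀ r = blowUp D.carrier x₀ r₀ :=
    fun r' hr' hle => (blowUp_congr_of_inter_ball_eq hYD (hle.trans (min_le_left _ _))).symm.trans
      (hstab r' hr' (hle.trans (min_le_right _ _)))
  have hx₀Y : x₀ ∈ Y.carrier :=
    (hYD ▸ ⟨hx₀, mem_ball_self hρ⟩ : x₀ ∈ Y.carrier ∩ ball x₀ ρ).1
  obtain ⟨D', hD'⟩ := Y.exists_carrier_eq_blowUp hn₀ hY hx₀Y hr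
    fun r' hr' hle => (hblow r' hr' hle).trans (hblow _ hr le_rfl).symm
  exact ⟨D', hD'.trans (hblow _ hr le_rfl)⟩
termination_by n - D.m
decreasing_by have := Y.m_le; omega

lemma exists_typedCone_carrier_eq_of_mem_calAB (hB : ℬ ⊆ TA n N' N) {n₀ : ℝ}
    (hn₀ : RepConst n N' N ℬ n₀) {Z : Set (EuclideanSpace ℝ (Fin N))} (hZ : Z ∈ calAB ℬ) :
    ∃ D : TypedCone n N' N, D.carrier = Z := by
  obtain ⟨W, hW, R, x₀, hx₀, r₀, hr₀, hstab, rfl⟩ := mem_iUnion₂.1 hZ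
  obtain ⟨-, -, E, -, rfl⟩ := hB hW
  obtain ⟨D, hD⟩ := E.exists_carrier_eq_blowUp hn₀ (mem_calAB_of_mem hB hW) hx₀ hr₀ hstab
  exact ⟨D.map R, by rw [D.map_carrier, hD]⟩

theorem statement9_general
    (n N' N : ℕ)
    (ℬ : Set (Set (EuclideanSpace ℝ (Fin N))))
    (hB : ℬ ⊆ TA n N' N)
    (δ₀ n₀ : ℝ) (hδ : SepConst n N' N ℬ δ₀)
    (hn₀ : RepConst n N' N ℬ n₀)
    (m : ℕ) (hm : m < n)
    (C : TypedCone n N' N) (hCm : C.m = m) (hCB : C.carrier ∈ calAB ℬ)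
    (x : EuclideanSpace ℝ (Fin N)) (hx : x ∈ C.spine m)
    (Z : Set (EuclideanSpace ℝ (Fin N))) (hZ : Z ∈ calAB ℬ)
    (r τ : ℝ) (hr : 0 < r) (hτ : τ ≤ δ₀)
    (hdxr : dxr x r C.carrier Z < τ) :
    (∃ k ≤ m, IsTypeM n N' N k Z) ∧
    ∃ D : TypedCone n N' N, D.carrier = Z ∧ D.m ≤ m ∧
      Metric.infDist x (D.spine m) < n₀ * (1 + δ₀⁻¹) * τ * r := by
  subst hCm
  obtain ⟨D, rfl⟩ := exists_typedCone_carrier_eq_of_mem_calAB hB hn₀ hZ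
  have hδ₀ : 0 < δ₀ := hδ.1
  have hτ₀ : 0 < τ := (dxr_nonneg hr _ _).trans_lt hdxr
  have hDm : D.m ≤ C.m :=
    hδ.le_of_dxr_le (by omega) hCB le_rfl hx hZ ⟨D.m_le, D, rfl, rfl⟩ hr (hdxr.le.trans hτ)
  refine ⟨⟨D.m, hDm, D.m_le, D, rfl, rfl⟩, D, rfl, hDm, not_le.1 fun hfar => ?_⟩
  set r' := τ * r / δ₀ with hr'def
  have hr' : 0 < r' := by positivity
  have hr'r : r' ≤ r := by rw [div_le_iff₀ hδ₀]; nlinarith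
  have hZρ : (D.carrier ∩ ball x (r' + τ * r)).Nonempty :=
    (nonempty_inter_ball_of_dxr_lt hr (C.spine_self_subset_carrier hx) D.carrier_nonempty
      hdxr).mono (inter_subset_inter_right _ (ball_subset_ball (by linarith)))
  obtain ⟨Y, hY, ⟨u, hu, -, hYu⟩, hDY⟩ := hn₀.exists_inter_ball_eq (by omega) hZ hDm
    (by positivity) hZρ (le_of_eq_of_le (by rw [hr'def]; field_simp; ring) hfar)
  have hCY : dxr x r' C.carrier Y ≤ δ₀ := by
    simpa [hr'def, div_div_cancel₀ (mul_pos hτ₀ hr).ne'] using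
      dxr_le_of_inter_ball_eq hr' hr'r D.carrier_nonempty hdxr hDY
  have huC : u ≤ C.m := hδ.le_of_dxr_le (by omega) hCB le_rfl hx hY hYu hr' hCY
  omega

/-- **Lemma 2.16**: let `W ∈ 𝒜(ℬ)` be of type `m < n` with `m`-spine through
`x`, and suppose `d_{x,r}(W,Z) < τ ≤ δ₀` for some `Z ∈ 𝒜(ℬ)`.  Then `Z` has
type `k ≤ m` and `dist(x, L^m(Z)) < n₀ (1 + δ₀⁻¹) τ r`. -/
theorem statement9
    (n N' N : ℕ) (hn : 0 < n) (hnN' : n < N') (hN'N : N' + n ≤ N)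
    (ℬ : Set (Set (EuclideanSpace ℝ (Fin N))))
    (hB : ℬ ⊆ TA n N' N) (hBfin : FiniteModIso ℬ)
    (δ₀ n₀ : ℝ) (hδ : SepConst n N' N ℬ δ₀) (hδ' : δ₀ < 1 / 10)
    (hn₀ : RepConst n N' N ℬ n₀)
    (m : ℕ) (hm : m < n)
    (C : TypedCone n N' N) (hCm : C.m = m) (hCB : C.carrier ∈ calAB ℬ)
    (x : EuclideanSpace ℝ (Fin N)) (hx : x ∈ C.spine m)
    (Z : Set (EuclideanSpace ℝ (Fin N))) (hZ : Z ∈ calAB ℬ)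
    (r τ : ℝ) (hr : 0 < r) (hτ : τ ≤ δ₀)
    (hdxr : dxr x r C.carrier Z < τ) :
    (∃ k ≤ m, IsTypeM n N' N k Z) ∧
    ∃ D : TypedCone n N' N, D.carrier = Z ∧ D.m ≤ m ∧
      Metric.infDist x (D.spine m) < n₀ * (1 + δ₀⁻¹) * τ * r :=
  statement9_general n N' N ℬ hB δ₀ n₀ hδ hn₀ m hm C hCm hCB x hx Z hZ r τ hr hτ hdxr

end DDTGen
end
end

section
/- Let d>0 be an integer and C>0, with Cε sufficiently small. Let x∈ℝ^N, r>0, and let P_1,P_2 be d-dimensional affine planes in ℝ^N such that dist(x,P_1)≤r/2 and d_{x,r}(P_1,P_2)<Cε. Then there is a constant C(d) depending only on d such that ‖Dπ_1−Dπ_2‖<C(d)·Cε and |π_1(y)−π_2(y)|<C(d)·Cε·(|y−x|+r) for every y∈ℝ^N, where π_i denotes the orthogonal projection onto P_i and Dπ_i denotes the orthogonal projection onto the linear subspace parallel to P_i (which is the constant derivative of the affine map π_i). -/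
open Metric Set
open scoped Classical

noncomputable section

/-!
Each plane is uniformly close to the other inside `B(x, r)`, and both contain a ball of radius
`r / 4` of themselves lying in `B(x, r)` (around `π₁ x` and `π₂ x`). Since `z ↦ z - πᵢ z` is affine,
its linear part `1 - Dπᵢ` is small on the direction of the other plane, i.e. each direction is
almost fixed by the other projection. Two orthogonal projections `E₁, E₂` with this property are
close in operator norm: `E₁ - E₂ = (1 - E₂) E₁ - E₂ (1 - E₁)`, and by self-adjointness the second
term is bounded like `(1 - E₁) E₂`. Evaluating the affine map `π₁ - π₂` at the
point `π₁ x`, where it is small, then gives the pointwise bound.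
-/

theorem AffineMap.norm_linear_apply_le_of_norm_le {V W : Type*} [NormedAddCommGroup V]
    [NormedSpace ℝ V] [NormedAddCommGroup W] [NormedSpace ℝ W] (f : V →ᵃ[ℝ] W)
    {P : AffineSubspace ℝ V} {q : V} (hq : q ∈ P) {s δ : ℝ} (hs : 0 < s)
    (hf : ∀ z ∈ P, ‖z - q‖ ≤ s → ‖f z‖ ≤ δ) {v : V} (hv : v ∈ P.direction) :
    ‖f.linear v‖ ≤ 2 * δ / s * ‖v‖ := by
  rcases eq_or_ne v 0 with rfl | hv0
  · simp
  have hnv : 0 < ‖v‖ := norm_pos_iff.mpr hv0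
  set t := s / ‖v‖
  have ht : 0 < t := div_pos hs hnv
  have hz : t • v + q ∈ P :=
    AffineSubspace.vadd_mem_of_mem_direction (P.direction.smul_mem t hv) hq
  have hzq : ‖t • v + q - q‖ ≤ s := by
    rw [add_sub_cancel_right, norm_smul, Real.norm_of_nonneg ht.le, div_mul_cancel₀ _ hnv.ne']
  have key : t * ‖f.linear v‖ ≤ 2 * δ :=
    calc t * ‖f.linear v‖ = ‖f (t • v + q) - f q‖ := by
          rw [← vsub_eq_sub (f _), ← f.linearMap_vsub, vsub_eq_sub, add_sub_cancel_right,
            map_smul, norm_smul, Real.norm_of_nonneg ht.le]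
      _ ≤ ‖f (t • v + q)‖ + ‖f q‖ := norm_sub_le _ _
      _ ≤ δ + δ := add_le_add (hf _ hz hzq) (hf q hq (by simpa using hs.le))
      _ = 2 * δ := by ring
  rw [div_mul_eq_mul_div, le_div_iff₀ hs]
  calc ‖f.linear v‖ * s = t * ‖f.linear v‖ * ‖v‖ := by
        simp only [t]; field_simp
    _ ≤ 2 * δ * ‖v‖ := by gcongr

theorem Submodule.norm_starProjection_sub_starProjection_apply_le {E : Type*}
    [NormedAddCommGroup E] [InnerProductSpace ℝ E] (K₁ K₂ : Submodule ℝ E)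
    [K₁.HasOrthogonalProjection] [K₂.HasOrthogonalProjection] {c : ℝ} (hc : 0 ≤ c)
    (h₁ : ∀ v ∈ K₁, ‖v - K₂.starProjection v‖ ≤ c * ‖v‖)
    (h₂ : ∀ v ∈ K₂, ‖v - K₁.starProjection v‖ ≤ c * ‖v‖) (w : E) :
    ‖K₁.starProjection w - K₂.starProjection w‖ ≤ 2 * c * ‖w‖ := by
  set u := w - K₁.starProjection w
  set g := K₂.starProjection u
  have hu : ‖u‖ ≤ ‖w‖ := by
    simpa [u] using K₁ᗮ.norm_starProjection_apply_le w
  have hgK : g ∈ K₂ := K₂.starProjection_apply_mem u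
  have hg_sq : ‖g‖ * ‖g‖ ≤ c * ‖w‖ * ‖g‖ :=
    calc ‖g‖ * ‖g‖ = inner ℝ u (g - K₁.starProjection g) := by
          rw [inner_sub_right, K₁.inner_left_of_mem_orthogonal (K₁.starProjection_apply_mem g)
            (K₁.sub_starProjection_mem_orthogonal w), sub_zero,
            ← K₂.starProjection_eq_self_iff.mpr hgK, ← K₂.inner_starProjection_left_eq_right,
            K₂.starProjection_eq_self_iff.mpr hgK, real_inner_self_eq_norm_mul_norm]
      _ ≤ ‖u‖ * ‖g - K₁.starProjection g‖ := real_inner_le_norm _ _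
      _ ≤ ‖w‖ * (c * ‖g‖) := by gcongr; exact h₂ g hgK
      _ = c * ‖w‖ * ‖g‖ := by ring
  have hg : ‖g‖ ≤ c * ‖w‖ := by
    rcases (norm_nonneg g).eq_or_lt with hg0 | hg0
    · rw [← hg0]; positivity
    · exact le_of_mul_le_mul_right hg_sq hg0
  have hsplit : K₁.starProjection w - K₂.starProjection w =
      (K₁.starProjection w - K₂.starProjection (K₁.starProjection w)) - g := by
    simp only [g, u, map_sub]; abel
  calc ‖K₁.starProjection w - K₂.starProjection w‖
        ≤ ‖K₁.starProjection w - K₂.starProjection (K₁.starProjection w)‖ + ‖g‖ := by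
          rw [hsplit]; exact norm_sub_le _ _
    _ ≤ c * ‖K₁.starProjection w‖ + c * ‖w‖ :=
          add_le_add (h₁ _ (K₁.starProjection_apply_mem w)) hg
    _ ≤ c * ‖w‖ + c * ‖w‖ := by gcongr; exact K₁.norm_starProjection_apply_le w
    _ = 2 * c * ‖w‖ := by ring

namespace DDTGen

theorem dxr_comm {X : Type*} [PseudoMetricSpace X] (x : X) (r : ℝ) (F₁ F₂ : Set X) :
    dxr x r F₁ F₂ = dxr x r F₂ F₁ := by
  rw [dxr, dxr, max_comm]

theorem infDist_lt_of_dxr_lt {X : Type*} [PseudoMetricSpace X] {x z : X} {r η : ℝ}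
    {F₁ F₂ : Set X} (hr : 0 < r) (hF₁ : F₁.Nonempty) (h : dxr x r F₁ F₂ < η)
    (hz : z ∈ F₂ ∩ ball x r) : infDist z F₁ < r * η := by
  obtain ⟨p, hp⟩ := hF₁
  have hbdd : BddAbove (⋃ w, range fun (_ : w ∈ F₂ ∩ ball x r) => infDist w F₁) := by
    refine ⟨r + dist x p, ?_⟩
    simp only [mem_upperBounds, mem_iUnion, mem_range]
    rintro _ ⟨w, hw, rfl⟩
    calc infDist w F₁ ≤ dist w p := infDist_le_dist_of_mem hp
      _ ≤ dist w x + dist x p := dist_triangle _ _ _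
      _ ≤ r + dist x p := by linarith [mem_ball.mp hw.2]
  have hsup := (le_ciSup₂ hbdd z hz).trans (le_max_left _
    (⨆ w ∈ F₁ ∩ ball x r, infDist w F₂))
  rw [dxr, one_div, inv_mul_lt_iff₀ hr] at h
  linarith

section IsOrthProjOnto

variable {V : Type*} [NormedAddCommGroup V] [InnerProductSpace ℝ V]
  {P : AffineSubspace ℝ V} {π : V →ᵃ[ℝ] V}

theorem IsOrthProjOnto.inner_sub_apply_eq_zero (hπ : IsOrthProjOnto P π) (y : V) {v : V}
    (hv : v ∈ P.direction) : inner ℝ (y - π y) v = 0 := by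
  simpa using hπ.2.2 y (v +ᵥ π y) (AffineSubspace.vadd_mem_of_mem_direction hv (hπ.1 y))

theorem IsOrthProjOnto.linear_apply_mem_direction (hπ : IsOrthProjOnto P π) (w : V) :
    π.linear w ∈ P.direction := by
  rw [congrFun π.decomp' w]
  exact AffineSubspace.vsub_mem_direction (hπ.1 w) (hπ.1 0)

theorem IsOrthProjOnto.inner_sub_linear_apply_eq_zero (hπ : IsOrthProjOnto P π) (w : V) {v : V}
    (hv : v ∈ P.direction) : inner ℝ (w - π.linear w) v = 0 := by
  rw [congrFun π.decomp' w, Pi.sub_apply, show w - (π w - π 0) = (w - π w) - (0 - π 0) by abel,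
    inner_sub_left, hπ.inner_sub_apply_eq_zero w hv, hπ.inner_sub_apply_eq_zero 0 hv, sub_zero]

theorem IsOrthProjOnto.hasOrthogonalProjection_direction (hπ : IsOrthProjOnto P π) :
    P.direction.HasOrthogonalProjection :=
  ⟨fun w => ⟨π.linear w, hπ.linear_apply_mem_direction w, fun v hv => by
    rw [real_inner_comm]; exact hπ.inner_sub_linear_apply_eq_zero w hv⟩⟩

theorem IsOrthProjOnto.linear_eq_starProjection (hπ : IsOrthProjOnto P π)
    [P.direction.HasOrthogonalProjection] (w : V) :
    π.linear w = P.direction.starProjection w :=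
  (Submodule.eq_starProjection_of_mem_of_inner_eq_zero (hπ.linear_apply_mem_direction w)
    fun _ hv => hπ.inner_sub_linear_apply_eq_zero w hv).symm

theorem IsOrthProjOnto.norm_sub_apply_le (hπ : IsOrthProjOnto P π) (y : V) {p : V}
    (hp : p ∈ P) : ‖y - π y‖ ≤ ‖y - p‖ := by
  have hpyth := norm_add_sq_eq_norm_sq_add_norm_sq_real (hπ.inner_sub_apply_eq_zero y
    (AffineSubspace.vsub_mem_direction (hπ.1 y) hp))
  rw [vsub_eq_sub, sub_add_sub_cancel] at hpyth
  nlinarith [norm_nonneg (y - π y), norm_nonneg (y - p), sq_nonneg ‖π y - p‖]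

theorem IsOrthProjOnto.norm_sub_apply_le_infDist (hπ : IsOrthProjOnto P π)
    (hP : (P : Set V).Nonempty) (y : V) : ‖y - π y‖ ≤ infDist y P :=
  (le_infDist hP).mpr fun _ hp => (hπ.norm_sub_apply_le y hp).trans_eq (dist_eq_norm _ _).symm

theorem IsOrthProjOnto.norm_sub_starProjection_le {P' : AffineSubspace ℝ V}
    (hπ : IsOrthProjOnto P π) [P.direction.HasOrthogonalProjection] {q : V} (hq : q ∈ P')
    {s δ : ℝ} (hs : 0 < s) (hnear : ∀ z ∈ P', ‖z - q‖ ≤ s → ‖z - π z‖ ≤ δ) {v : V}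
    (hv : v ∈ P'.direction) : ‖v - P.direction.starProjection v‖ ≤ 2 * δ / s * ‖v‖ := by
  simpa [← hπ.linear_eq_starProjection] using
    (AffineMap.id ℝ V - π).norm_linear_apply_le_of_norm_le hq hs (by simpa using hnear) hv

theorem IsOrthProjOnto.norm_linear_sub_linear_apply_le {P₁ P₂ : AffineSubspace ℝ V}
    {π₁ π₂ : V →ᵃ[ℝ] V} (hπ₁ : IsOrthProjOnto P₁ π₁) (hπ₂ : IsOrthProjOnto P₂ π₂) {q₁ q₂ : V}
    (hq₁ : q₁ ∈ P₁) (hq₂ : q₂ ∈ P₂) {s δ : ℝ} (hs : 0 < s)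
    (hnear₁ : ∀ z ∈ P₁, ‖z - q₁‖ ≤ s → ‖z - π₂ z‖ ≤ δ)
    (hnear₂ : ∀ z ∈ P₂, ‖z - q₂‖ ≤ s → ‖z - π₁ z‖ ≤ δ) (w : V) :
    ‖π₁.linear w - π₂.linear w‖ ≤ 4 * δ / s * ‖w‖ := by
  have := hπ₁.hasOrthogonalProjection_direction
  have := hπ₂.hasOrthogonalProjection_direction
  have hδ : 0 ≤ δ := (norm_nonneg _).trans (hnear₁ q₁ hq₁ (by simpa using hs.le))
  rw [hπ₁.linear_eq_starProjection, hπ₂.linear_eq_starProjection,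
    show 4 * δ / s = 2 * (2 * δ / s) by ring]
  exact Submodule.norm_starProjection_sub_starProjection_apply_le _ _ (by positivity)
    (fun _ hv => hπ₂.norm_sub_starProjection_le hq₁ hs hnear₁ hv)
    (fun _ hv => hπ₁.norm_sub_starProjection_le hq₂ hs hnear₂ hv) w

theorem IsOrthProjOnto.norm_sub_le_of_near {P₁ P₂ : AffineSubspace ℝ V} {π₁ π₂ : V →ᵃ[ℝ] V}
    (hπ₁ : IsOrthProjOnto P₁ π₁) (hπ₂ : IsOrthProjOnto P₂ π₂) {x : V} {r η : ℝ} (hr : 0 < r)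
    (hη : η < 1 / 4) (hx : ‖x - π₁ x‖ ≤ r / 2)
    (hnear₁ : ∀ z ∈ (P₁ : Set V) ∩ ball x r, ‖z - π₂ z‖ ≤ r * η)
    (hnear₂ : ∀ z ∈ (P₂ : Set V) ∩ ball x r, ‖z - π₁ z‖ ≤ r * η) :
    (∀ w, ‖π₁.linear w - π₂.linear w‖ ≤ 16 * η * ‖w‖) ∧
      ∀ y, ‖π₁ y - π₂ y‖ ≤ 16 * η * ‖y - x‖ + 9 * r * η := by
  have hx₁ : π₁ x ∈ (P₁ : Set V) ∩ ball x r :=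
    ⟨hπ₁.1 x, by rw [mem_ball, dist_eq_norm, norm_sub_rev]; linarith⟩
  have hfar₁ : ‖π₁ x - π₂ (π₁ x)‖ ≤ r * η := hnear₁ _ hx₁
  have hη₀ : 0 ≤ η := nonneg_of_mul_nonneg_right ((norm_nonneg _).trans hfar₁) hr
  have hx₂ : ‖x - π₂ x‖ ≤ r / 2 + r * η :=
    calc ‖x - π₂ x‖ ≤ ‖x - π₂ (π₁ x)‖ := hπ₂.norm_sub_apply_le x (hπ₂.1 _)
      _ ≤ ‖x - π₁ x‖ + ‖π₁ x - π₂ (π₁ x)‖ := norm_sub_le_norm_sub_add_norm_sub _ _ _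
      _ ≤ r / 2 + r * η := add_le_add hx hfar₁
  have hball {q : V} (hq : ‖x - q‖ + r / 4 < r) (z : V) (hz : ‖z - q‖ ≤ r / 4) : z ∈ ball x r := by
    rw [mem_ball, dist_eq_norm]
    linarith [norm_sub_le_norm_sub_add_norm_sub z q x, norm_sub_rev x q]
  have hlin (w : V) : ‖π₁.linear w - π₂.linear w‖ ≤ 16 * η * ‖w‖ := by
    have := hπ₁.norm_linear_sub_linear_apply_le hπ₂ (hπ₁.1 x) (hπ₂.1 x) (s := r / 4)
      (by positivity) (fun z hz hzq => hnear₁ z ⟨hz, hball (by linarith) z hzq⟩)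
      (fun z hz hzq => hnear₂ z ⟨hz, hball (by nlinarith) z hzq⟩) w
    rwa [show 4 * (r * η) / (r / 4) = 16 * η by field_simp; ring] at this
  refine ⟨hlin, fun y => ?_⟩
  have hsplit : π₁ y - π₂ y = (π₁ (π₁ x) - π₂ (π₁ x)) + (π₁.linear - π₂.linear) (y - π₁ x) := by
    rw [← AffineMap.sub_linear, ← vsub_eq_sub y, AffineMap.linearMap_vsub]
    simp
  calc ‖π₁ y - π₂ y‖ ≤ r * η + 16 * η * ‖y - π₁ x‖ := by
        rw [hsplit, hπ₁.2.1 _ (hπ₁.1 x)]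
        exact norm_add_le_of_le hfar₁ (hlin _)
    _ ≤ r * η + 16 * η * (‖y - x‖ + r / 2) := by
        have := norm_sub_le_norm_sub_add_norm_sub y x (π₁ x)
        gcongr
        linarith
    _ = 16 * η * ‖y - x‖ + 9 * r * η := by ring

end IsOrthProjOnto

theorem statement11_general (d : ℕ) :
    ∃ K κ : ℝ, 0 < K ∧ 0 < κ ∧
    ∀ (N : ℕ) (x : EuclideanSpace ℝ (Fin N)) (r Cc ε : ℝ)
      (P₁ P₂ : AffineSubspace ℝ (EuclideanSpace ℝ (Fin N)))
      (π₁ π₂ : EuclideanSpace ℝ (Fin N) →ᵃ[ℝ] EuclideanSpace ℝ (Fin N)),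
      0 < r → 0 < Cc → 0 < ε → Cc * ε < κ →
      (P₁ : Set (EuclideanSpace ℝ (Fin N))).Nonempty →
      (P₂ : Set (EuclideanSpace ℝ (Fin N))).Nonempty →
      Module.finrank ℝ P₁.direction = d →
      Module.finrank ℝ P₂.direction = d →
      IsOrthProjOnto P₁ π₁ → IsOrthProjOnto P₂ π₂ →
      Metric.infDist x (P₁ : Set (EuclideanSpace ℝ (Fin N))) ≤ r / 2 →
      ((P₂ : Set (EuclideanSpace ℝ (Fin N))) ∩ ball x r).Nonempty →
      dxr x r (P₁ : Set (EuclideanSpace ℝ (Fin N)))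
        (P₂ : Set (EuclideanSpace ℝ (Fin N))) < Cc * ε →
      ‖LinearMap.toContinuousLinearMap (π₁.linear - π₂.linear)‖ < K * (Cc * ε) ∧
      ∀ y : EuclideanSpace ℝ (Fin N),
        ‖π₁ y - π₂ y‖ < K * (Cc * ε) * (‖y - x‖ + r) := by
  refine ⟨20, 1 / 4, by norm_num, by norm_num, ?_⟩
  intro N x r Cc ε P₁ P₂ π₁ π₂ hr hCc hε hκ hP₁ hP₂ _ _ hπ₁ hπ₂ hx _ hdxr
  have hη : 0 < Cc * ε := mul_pos hCc hε
  obtain ⟨hlin, hpt⟩ := hπ₁.norm_sub_le_of_near hπ₂ hr hκ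
    ((hπ₁.norm_sub_apply_le_infDist hP₁ x).trans hx)
    (fun z hz => (hπ₂.norm_sub_apply_le_infDist hP₂ z).trans
      (infDist_lt_of_dxr_lt hr hP₂ (dxr_comm x r P₁ P₂ ▸ hdxr) hz).le)
    (fun z hz => (hπ₁.norm_sub_apply_le_infDist hP₁ z).trans
      (infDist_lt_of_dxr_lt hr hP₁ hdxr hz).le)
  refine ⟨?_, fun y => (hpt y).trans_lt ?_⟩
  · have hop : ‖LinearMap.toContinuousLinearMap (π₁.linear - π₂.linear)‖ ≤ 16 * (Cc * ε) :=
      ContinuousLinearMap.opNorm_le_bound _ (by positivity) fun w => by simpa using hlin w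
    linarith
  · nlinarith [norm_nonneg (y - x)]

/-- **Lemma 4.1**: if two `d`-dimensional affine planes `P₁, P₂` of `ℝ^N`
satisfy `dist(x,P₁) ≤ r/2` and `d_{x,r}(P₁,P₂) < Cε` (with `Cε` small enough),
then their orthogonal projections `π₁, π₂` satisfy
`‖Dπ₁ − Dπ₂‖ < C(d)·Cε` and `|π₁(y) − π₂(y)| < C(d)·Cε·(|y−x|+r)` for all `y`,
where `C(d)` depends only on `d`. -/
theorem statement11 (d : ℕ) (hd : 0 < d) :
    ∃ K κ : ℝ, 0 < K ∧ 0 < κ ∧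
    ∀ (N : ℕ) (x : EuclideanSpace ℝ (Fin N)) (r Cc ε : ℝ)
      (P₁ P₂ : AffineSubspace ℝ (EuclideanSpace ℝ (Fin N)))
      (π₁ π₂ : EuclideanSpace ℝ (Fin N) →ᵃ[ℝ] EuclideanSpace ℝ (Fin N)),
      0 < r → 0 < Cc → 0 < ε → Cc * ε < κ →
      (P₁ : Set (EuclideanSpace ℝ (Fin N))).Nonempty →
      (P₂ : Set (EuclideanSpace ℝ (Fin N))).Nonempty →
      Module.finrank ℝ P₁.direction = d →
      Module.finrank ℝ P₂.direction = d →
      IsOrthProjOnto P₁ π₁ → IsOrthProjOnto P₂ π₂ →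
      Metric.infDist x (P₁ : Set (EuclideanSpace ℝ (Fin N))) ≤ r / 2 →
      ((P₂ : Set (EuclideanSpace ℝ (Fin N))) ∩ ball x r).Nonempty →
      dxr x r (P₁ : Set (EuclideanSpace ℝ (Fin N)))
        (P₂ : Set (EuclideanSpace ℝ (Fin N))) < Cc * ε →
      ‖LinearMap.toContinuousLinearMap (π₁.linear - π₂.linear)‖ < K * (Cc * ε) ∧
      ∀ y : EuclideanSpace ℝ (Fin N),
        ‖π₁ y - π₂ y‖ < K * (Cc * ε) * (‖y - x‖ + r) :=
  statement11_general d

end DDTGen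
end
end
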